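/- arXiv:1709.08938 — 3 statements merged into one kernel-verified Lean document; each statement's English description precedes it below -/
import Mathlib

section
/- Let G be a topological groupoid acting on a space X with surjective momentum map. If the action is strongly locally free at every unit (i.e., every unit has a neighbourhood U in G such that for all η, δ ∈ U and x ∈ X, ηx = δx implies η = δ), then the action is strongly locally free at every γ ∈ G. -/
open Topology

universe u v w

/-- A topological groupoid: a space of arrows `Arr`, a space of objects (units)
`Obj`, with continuous source, target, unit, (everywhere-defined but only
meaningful on composable pairs) multiplication and inversion. -/
structure TopGroupoidStruct (Arr : Type u) (Obj : Type v)
    [TopologicalSpace Arr] [TopologicalSpace Obj] where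
  src : Arr → Obj
  tgt : Arr → Obj
  unit : Obj → Arr
  mul : Arr → Arr → Arr
  inv : Arr → Arr
  src_unit : ∀ u, src (unit u) = u
  tgt_unit : ∀ u, tgt (unit u) = u
  src_mul : ∀ γ η, src γ = tgt η → src (mul γ η) = src η
  tgt_mul : ∀ γ η, src γ = tgt η → tgt (mul γ η) = tgt γ
  src_inv : ∀ γ, src (inv γ) = tgt γ
  tgt_inv : ∀ γ, tgt (inv γ) = src γ
  mul_assoc' : ∀ γ η δ, src γ = tgt η → src η = tgt δ →
    mul (mul γ η) δ = mul γ (mul η δ)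
  unit_mul : ∀ γ, mul (unit (tgt γ)) γ = γ
  mul_unit : ∀ γ, mul γ (unit (src γ)) = γ
  inv_mul : ∀ γ, mul (inv γ) γ = unit (src γ)
  mul_inv : ∀ γ, mul γ (inv γ) = unit (tgt γ)
  continuous_src : Continuous src
  continuous_tgt : Continuous tgt
  continuous_unit : Continuous unit
  continuous_inv : Continuous inv
  continuous_mul :
    Continuous fun p : {q : Arr × Arr // src q.1 = tgt q.2} => mul p.1.1 p.1.2

/-- A continuous left action of a topological groupoid on a space `X` with
momentum map `mom : X → Obj`; the action `act γ x` is only meaningful on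
composable pairs, i.e. when `src γ = mom x`. -/
structure TopGroupoidAction {Arr : Type u} {Obj : Type v}
    [TopologicalSpace Arr] [TopologicalSpace Obj]
    (G : TopGroupoidStruct Arr Obj) (X : Type w) [TopologicalSpace X] where
  mom : X → Obj
  act : Arr → X → X
  continuous_mom : Continuous mom
  mom_act : ∀ γ x, G.src γ = mom x → mom (act γ x) = G.tgt γ
  unit_act : ∀ x, act (G.unit (mom x)) x = x
  mul_act : ∀ γ η x, G.src η = mom x → G.src γ = G.tgt η →
    act (G.mul γ η) x = act γ (act η x)
  continuous_act :
    Continuous fun p : {q : Arr × X // G.src q.1 = mom q.2} => act p.1.1 p.1.2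

variable {Arr : Type u} {Obj : Type v} {X : Type w}
  [TopologicalSpace Arr] [TopologicalSpace Obj] [TopologicalSpace X]

/-- The action is strongly locally free at `γ`: there is a neighbourhood `U` of
`γ` such that any two elements of `U` acting equally on some point must be
equal. -/
def StronglyLocallyFreeAt (G : TopGroupoidStruct Arr Obj)
    (A : TopGroupoidAction G X) (γ : Arr) : Prop :=
  ∃ U ∈ 𝓝 γ, ∀ η ∈ U, ∀ δ ∈ U, ∀ x : X,
    G.src η = A.mom x → G.src δ = A.mom x → A.act η x = A.act δ x → η = δ

/-- If a groupoid action with surjective momentum map is strongly locally free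
at every unit, then it is strongly locally free at every arrow. -/
theorem stmt_7 (G : TopGroupoidStruct Arr Obj) (A : TopGroupoidAction G X)
    (hsurj : Function.Surjective A.mom)
    (hunits : ∀ u : Obj, StronglyLocallyFreeAt G A (G.unit u)) :
    ∀ γ : Arr, StronglyLocallyFreeAt G A γ := by
  intro γ
  obtain ⟨U, hU, hfree⟩ := hunits (G.src γ)
  -- the map (η, δ) ↦ (inv η) * δ on pairs with equal targets
  set S := {p : Arr × Arr // G.tgt p.1 = G.tgt p.2} with hS
  have hcont : Continuous fun p : S => G.mul (G.inv p.1.1) p.1.2 := by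
    have he : Continuous fun p : S =>
        (⟨(G.inv p.1.1, p.1.2), by rw [G.src_inv]; exact p.2⟩ :
          {q : Arr × Arr // G.src q.1 = G.tgt q.2}) := by
      apply Continuous.subtype_mk
      exact (G.continuous_inv.comp (continuous_fst.comp continuous_subtype_val)).prodMk
        (continuous_snd.comp continuous_subtype_val)
    exact G.continuous_mul.comp he
  have hpt : (fun p : S => G.mul (G.inv p.1.1) p.1.2) ⟨(γ, γ), rfl⟩ = G.unit (G.src γ) :=
    G.inv_mul γ
  have hnhd : (fun p : S => G.mul (G.inv p.1.1) p.1.2) ⁻¹' U ∈ 𝓝 (⟨(γ, γ), rfl⟩ : S) :=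
    hcont.continuousAt.preimage_mem_nhds (by show U ∈ 𝓝 (G.mul (G.inv γ) γ); rw [G.inv_mul]; exact hU)
  rw [nhds_subtype_eq_comap, Filter.mem_comap] at hnhd
  obtain ⟨T, hT, hTsub⟩ := hnhd
  rw [nhds_prod_eq, Filter.mem_prod_iff] at hT
  obtain ⟨V₁, hV₁, V₂, hV₂, hVsub⟩ := hT
  have hg : Continuous fun η : Arr => G.unit (G.src η) :=
    G.continuous_unit.comp G.continuous_src
  have hV₃ : (fun η : Arr => G.unit (G.src η)) ⁻¹' U ∈ 𝓝 γ :=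
    hg.continuousAt.preimage_mem_nhds hU
  refine ⟨V₁ ∩ V₂ ∩ (fun η : Arr => G.unit (G.src η)) ⁻¹' U,
    Filter.inter_mem (Filter.inter_mem hV₁ hV₂) hV₃, ?_⟩
  rintro η ⟨⟨hη1, hη2⟩, hη3⟩ δ ⟨⟨hδ1, hδ2⟩, hδ3⟩ x hη hδ heq
  have htgt : G.tgt η = G.tgt δ := by
    rw [← A.mom_act η x hη, ← A.mom_act δ x hδ, heq]
  -- θ = (inv η) * δ lies in U
  have hθU : G.mul (G.inv η) δ ∈ U := by
    simpa using hTsub (show (⟨(η, δ), htgt⟩ : S) ∈ Subtype.val ⁻¹' T from hVsub ⟨hη1, hδ2⟩)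
  have hsinv : G.src (G.inv η) = G.tgt δ := by rw [G.src_inv, htgt]
  have hθsrc : G.src (G.mul (G.inv η) δ) = A.mom x := by
    rw [G.src_mul _ _ hsinv, hδ]
  have hθact : A.act (G.mul (G.inv η) δ) x = x := by
    rw [A.mul_act _ _ _ hδ hsinv, ← heq, ← A.mul_act _ _ _ hη (by rw [G.src_inv]),
      G.inv_mul, hη, A.unit_act]
  have hθeq : G.mul (G.inv η) δ = G.unit (G.src η) := by
    refine hfree _ hθU _ hη3 x hθsrc (by rw [G.src_unit, hη]) ?_
    rw [hθact, hη, A.unit_act]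
  have : G.mul η (G.mul (G.inv η) δ) = G.mul η (G.unit (G.src η)) := by rw [hθeq]
  rw [G.mul_unit, ← G.mul_assoc' _ _ _ (G.tgt_inv η).symm hsinv, G.mul_inv, htgt,
    G.unit_mul] at this
  exact this.symm
end

section
/- Let X and Y be locally compact Hausdorff spaces and φ : X → Y a surjective local homeomorphism, and let λ be a Radon measure on Y. Then there is a unique measure φ*(λ) on X such that for every open U ⊆ X on which φ restricts to a homeomorphism and every f ∈ C_c(X) supported in U, ∫_X f dφ*(λ) = ∫_Y f∘(φ|_U)⁻¹ extended by zero dλ. -/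
/-!
The pullback is the measure of the content `K ↦ ∫⁻ y, #(K ∩ φ⁻¹' {y}) ∂λ` on compact sets of `X`.
On a subset `B` of an open set `U` on which `φ` is injective, the fiber count is the indicator
of `φ '' B`, and outer regularity of both measures gives `φ*(λ) B = λ (φ '' B)`. So `φ|_U`
carries `φ*(λ)` restricted to `U` to `λ` restricted to `φ '' U`, which is the integral formula.
For uniqueness, a partition of unity subordinate to such charts splits every `f ∈ C_c(X)` into
pieces supported in charts, and a regular measure is determined by its integrals on `C_c(X)`.
-/

open MeasureTheory Set Function Topology TopologicalSpace
open scoped ENNReal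

namespace IsLocalHomeomorph

variable {X Y : Type*} [TopologicalSpace X] [TopologicalSpace Y] {φ : X → Y} {U : Set X}

lemma isOpenEmbedding_domRestrict (hφ : IsLocalHomeomorph φ) (hU : IsOpen U)
    (hinj : InjOn φ U) : IsOpenEmbedding (U.domRestrict φ) :=
  (hφ.comp hU.isOpenEmbedding_subtypeVal.isLocalHomeomorph).isOpenEmbedding_of_injective
    hinj.injective

lemma measurableSet_image [MeasurableSpace X] [BorelSpace X] [MeasurableSpace Y] [BorelSpace Y]
    (hφ : IsLocalHomeomorph φ) (hU : IsOpen U) (hinj : InjOn φ U) {B : Set X}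
    (hB : MeasurableSet B) (hBU : B ⊆ U) : MeasurableSet (φ '' B) := by
  rw [← inter_eq_left.mpr hBU, ← image_domRestrict]
  exact (hφ.isOpenEmbedding_domRestrict hU hinj).measurableEmbedding.measurableSet_image'
    (measurable_subtype_coe hB)

lemma exists_isCompact_image_eq (hφ : IsLocalHomeomorph φ) (hU : IsOpen U) (hinj : InjOn φ U)
    {L : Set Y} (hL : IsCompact L) (hLU : L ⊆ φ '' U) :
    ∃ K ⊆ U, IsCompact K ∧ φ '' K = L := by
  have he := hφ.isOpenEmbedding_domRestrict hU hinj
  have hLe : L ⊆ range (U.domRestrict φ) := by rwa [range_domRestrict]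
  refine ⟨Subtype.val '' (U.domRestrict φ ⁻¹' L), Subtype.coe_image_subset _ _,
    (he.isInducing.isCompact_preimage' hL hLe).image continuous_subtype_val, ?_⟩
  rw [← inter_eq_left.mpr (Subtype.coe_image_subset _ _), ← image_domRestrict,
    preimage_image_eq _ Subtype.val_injective, image_preimage_eq_of_subset hLe]

end IsLocalHomeomorph

section FiberCard

variable {X Y : Type*} {φ : X → Y} {A B : Set X}

noncomputable def fiberCard (φ : X → Y) (A : Set X) (y : Y) : ℝ≥0∞ := (A ∩ φ ⁻¹' {y}).encard

lemma fiberCard_mono (h : A ⊆ B) : fiberCard φ A ≤ fiberCard φ B := fun _ =>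
  ENat.toENNReal_le.mpr (encard_le_encard (inter_subset_inter_left _ h))

@[simp]
lemma fiberCard_empty : fiberCard φ ∅ = 0 := by
  ext; simp [fiberCard]

lemma fiberCard_union_le (A B : Set X) : fiberCard φ (A ∪ B) ≤ fiberCard φ A + fiberCard φ B :=
  fun y => by
    simp only [fiberCard, Pi.add_apply, union_inter_distrib_right]
    exact_mod_cast encard_union_le _ _

lemma fiberCard_union (h : Disjoint A B) :
    fiberCard φ (A ∪ B) = fiberCard φ A + fiberCard φ B := by
  ext y
  simp only [fiberCard, Pi.add_apply, union_inter_distrib_right,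
    encard_union_eq (h.mono inter_subset_left inter_subset_left)]
  push_cast; rfl

lemma fiberCard_biUnion_le {ι : Type*} (t : Finset ι) (A : ι → Set X) :
    fiberCard φ (⋃ i ∈ t, A i) ≤ ∑ i ∈ t, fiberCard φ (A i) :=
  t.apply_union_le_sum fiberCard_empty (fiberCard_union_le _ _)

lemma fiberCard_of_injOn (h : InjOn φ A) : fiberCard φ A = (φ '' A).indicator 1 := by
  ext y
  by_cases hy : y ∈ φ '' A
  · obtain ⟨x, hx, rfl⟩ := hy
    have : A ∩ φ ⁻¹' {φ x} = {x} :=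
      eq_singleton_iff_unique_mem.mpr ⟨⟨hx, rfl⟩, fun x' hx' => h hx'.1 hx hx'.2⟩
    simp [fiberCard, this, mem_image_of_mem φ hx]
  · have : A ∩ φ ⁻¹' {y} = ∅ := eq_empty_iff_forall_notMem.mpr fun x hx => hy ⟨x, hx.1, hx.2⟩
    simp [fiberCard, this, hy]

end FiberCard

lemma IsCompact.exists_finset_injOn_cover {X Y : Type*} [TopologicalSpace X] {φ : X → Y}
    {K : Set X} (hK : IsCompact K) (hφ : IsLocallyInjective φ) :
    ∃ (t : Finset X) (U : X → Set X), (∀ i ∈ t, IsOpen (U i) ∧ InjOn φ (U i)) ∧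
      K ⊆ ⋃ i ∈ t, U i := by
  choose U hUo hxU hUinj using hφ
  obtain ⟨t, ht⟩ := hK.elim_finite_subcover U hUo fun x _ => mem_iUnion.2 ⟨x, hxU x⟩
  exact ⟨t, U, fun i _ => ⟨hUo i, hUinj i⟩, ht⟩

section PullbackMeasure

variable {X Y : Type*} [TopologicalSpace X] [TopologicalSpace Y]
  [MeasurableSpace Y] [BorelSpace Y] {φ : X → Y}

lemma lintegral_fiberCard_lt_top [T2Space Y] (hφ : IsLocalHomeomorph φ) (lam : Measure Y)
    [IsFiniteMeasureOnCompacts lam] {K : Set X} (hK : IsCompact K) :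
    ∫⁻ y, fiberCard φ K y ∂lam < ∞ := by
  obtain ⟨t, U, hU, hKt⟩ := hK.exists_finset_injOn_cover hφ.isLocallyInjective
  have hφK : IsCompact (φ '' K) := hK.image hφ.continuous
  have hbound : fiberCard φ K ≤ ∑ _i ∈ t, (φ '' K).indicator 1 := calc
    fiberCard φ K ≤ fiberCard φ (⋃ i ∈ t, K ∩ U i) :=
        fiberCard_mono fun x hx => by simpa [hx] using hKt hx
    _ ≤ ∑ i ∈ t, fiberCard φ (K ∩ U i) := fiberCard_biUnion_le t _
    _ ≤ ∑ _i ∈ t, (φ '' K).indicator 1 := Finset.sum_le_sum fun i hi => by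
        rw [fiberCard_of_injOn ((hU i hi).2.mono inter_subset_right)]
        exact indicator_le_indicator_of_subset (image_mono inter_subset_left) fun _ => zero_le
  calc ∫⁻ y, fiberCard φ K y ∂lam
      ≤ ∫⁻ y, ∑ _i ∈ t, (φ '' K).indicator 1 y ∂lam :=
        lintegral_mono fun y => by simpa using hbound y
    _ = ∑ _i ∈ t, lam (φ '' K) := by
        rw [lintegral_finsetSum _ fun _ _ => measurable_one.indicator hφK.measurableSet]
        simp [lintegral_indicator_one hφK.measurableSet]
    _ < ∞ := ENNReal.sum_lt_top.mpr fun _ _ => hφK.measure_lt_top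

variable [MeasurableSpace X] [BorelSpace X]

lemma measurable_fiberCard_of_subset_biUnion (hφ : IsLocalHomeomorph φ) {ι : Type*}
    {t : Finset ι} {U : ι → Set X} (hU : ∀ i ∈ t, IsOpen (U i) ∧ InjOn φ (U i)) {A : Set X}
    (hA : MeasurableSet A) (hAt : A ⊆ ⋃ i ∈ t, U i) : Measurable (fiberCard φ A) := by
  classical
  induction t using Finset.induction_on generalizing A with
  | empty =>
    obtain rfl : A = ∅ := by simpa using hAt
    rw [fiberCard_empty]
    exact measurable_const
  | insert a t ha ih =>
    obtain ⟨hUo, hUinj⟩ := hU a (Finset.mem_insert_self a t)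
    rw [← inter_union_sdiff A (U a), fiberCard_union disjoint_sdiff_inter.symm,
      fiberCard_of_injOn (hUinj.mono inter_subset_right)]
    refine (measurable_one.indicator (hφ.measurableSet_image hUo hUinj
      (hA.inter hUo.measurableSet) inter_subset_right)).add
      (ih (fun i hi => hU i (Finset.mem_insert_of_mem hi)) (hA.diff hUo.measurableSet) ?_)
    rintro x ⟨hxA, hxU⟩
    simpa [hxU] using hAt hxA

variable [T2Space X]

lemma measurable_fiberCard_of_isCompact (hφ : IsLocalHomeomorph φ) {K : Set X}
    (hK : IsCompact K) : Measurable (fiberCard φ K) := by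
  obtain ⟨t, U, hU, hKt⟩ := hK.exists_finset_injOn_cover hφ.isLocallyInjective
  exact measurable_fiberCard_of_subset_biUnion hφ hU hK.measurableSet hKt

variable [T2Space Y]

noncomputable def pullbackContent (hφ : IsLocalHomeomorph φ) (lam : Measure Y)
    [IsFiniteMeasureOnCompacts lam] : Content X where
  toFun K := (∫⁻ y, fiberCard φ K y ∂lam).toNNReal
  mono' K₁ K₂ h := ENNReal.toNNReal_mono (lintegral_fiberCard_lt_top hφ lam K₂.isCompact).ne
    (lintegral_mono (fiberCard_mono h))
  sup_disjoint' K₁ K₂ hd _ _ := by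
    rw [Compacts.coe_sup, fiberCard_union hd, Pi.add_def,
      lintegral_add_left (measurable_fiberCard_of_isCompact hφ K₁.isCompact),
      ENNReal.toNNReal_add (lintegral_fiberCard_lt_top hφ lam K₁.isCompact).ne
        (lintegral_fiberCard_lt_top hφ lam K₂.isCompact).ne]
  sup_le' K₁ K₂ := by
    have h₁ := (lintegral_fiberCard_lt_top hφ lam K₁.isCompact).ne
    have h₂ := (lintegral_fiberCard_lt_top hφ lam K₂.isCompact).ne
    rw [← ENNReal.toNNReal_add h₁ h₂]
    refine ENNReal.toNNReal_mono (ENNReal.add_ne_top.mpr ⟨h₁, h₂⟩) ?_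
    rw [← lintegral_add_left (measurable_fiberCard_of_isCompact hφ K₁.isCompact)]
    exact lintegral_mono (fiberCard_union_le _ _)

variable (hφ : IsLocalHomeomorph φ) (lam : Measure Y)

lemma pullbackContent_apply [IsFiniteMeasureOnCompacts lam] (K : Compacts X) :
    pullbackContent hφ lam K = ∫⁻ y, fiberCard φ K y ∂lam :=
  ENNReal.coe_toNNReal (lintegral_fiberCard_lt_top hφ lam K.isCompact).ne

lemma pullbackContent_apply_of_injOn [IsFiniteMeasureOnCompacts lam] {K : Compacts X}
    (hK : InjOn φ K) : pullbackContent hφ lam K = lam (φ '' K) := by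
  rw [pullbackContent_apply, fiberCard_of_injOn hK,
    lintegral_indicator_one (K.isCompact.image hφ.continuous).measurableSet]

noncomputable def pullbackMeasure [IsFiniteMeasureOnCompacts lam] : Measure X :=
  (pullbackContent hφ lam).measure

instance [IsFiniteMeasureOnCompacts lam] : (pullbackMeasure hφ lam).OuterRegular :=
  Content.outerRegular _

instance [IsFiniteMeasureOnCompacts lam] [LocallyCompactSpace X] :
    (pullbackMeasure hφ lam).Regular :=
  Content.regular _

variable {U : Set X} (hU : IsOpen U) (hinj : InjOn φ U)
include hU hinj

lemma pullbackMeasure_apply_isOpen_of_injOn [lam.Regular] :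
    pullbackMeasure hφ lam U = lam (φ '' U) := by
  rw [pullbackMeasure, Content.measure_apply _ hU.measurableSet,
    Content.outerMeasure_of_isOpen _ U hU]
  apply le_antisymm
  · exact iSup₂_le fun K hKU => (pullbackContent_apply_of_injOn hφ lam (hinj.mono hKU)).trans_le
      (measure_mono (image_mono hKU))
  · rw [(hφ.isOpenMap U hU).measure_eq_iSup_isCompact lam]
    refine iSup₂_le fun L hLU => iSup_le fun hL => ?_
    obtain ⟨K, hKU, hK, rfl⟩ := hφ.exists_isCompact_image_eq hU hinj hL hLU
    exact (pullbackContent_apply_of_injOn hφ lam (K := ⟨K, hK⟩) (hinj.mono hKU)).ge.trans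
      (Content.le_innerContent _ ⟨K, hK⟩ ⟨U, hU⟩ hKU)

lemma pullbackMeasure_apply_of_subset_of_injOn [lam.Regular] {B : Set X} (hBU : B ⊆ U) :
    pullbackMeasure hφ lam B = lam (φ '' B) := by
  apply le_antisymm
  · rw [Set.measure_eq_iInf_isOpen (φ '' B) lam]
    refine le_iInf₂ fun W hBW => le_iInf fun hW => ?_
    have hV : IsOpen (U ∩ φ ⁻¹' W) := hU.inter (hW.preimage hφ.continuous)
    calc pullbackMeasure hφ lam B ≤ pullbackMeasure hφ lam (U ∩ φ ⁻¹' W) :=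
          measure_mono (subset_inter hBU (image_subset_iff.mp hBW))
      _ = lam (φ '' (U ∩ φ ⁻¹' W)) :=
          pullbackMeasure_apply_isOpen_of_injOn hφ lam hV (hinj.mono inter_subset_left)
      _ ≤ lam W :=
          measure_mono ((image_mono inter_subset_right).trans (image_preimage_subset φ W))
  · rw [Set.measure_eq_iInf_isOpen B (pullbackMeasure hφ lam)]
    refine le_iInf₂ fun V hBV => le_iInf fun hV => ?_
    calc lam (φ '' B) ≤ lam (φ '' (V ∩ U)) := measure_mono (image_mono (subset_inter hBV hBU))
      _ = pullbackMeasure hφ lam (V ∩ U) :=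
          (pullbackMeasure_apply_isOpen_of_injOn hφ lam (hV.inter hU)
            (hinj.mono inter_subset_right)).symm
      _ ≤ pullbackMeasure hφ lam V := measure_mono inter_subset_left

lemma map_domRestrict_comap_pullbackMeasure [lam.Regular] :
    ((pullbackMeasure hφ lam).comap Subtype.val).map (U.domRestrict φ) =
      lam.restrict (φ '' U) := by
  ext t ht
  rw [(hφ.isOpenEmbedding_domRestrict hU hinj).measurableEmbedding.map_apply,
    (MeasurableEmbedding.subtype_coe hU.measurableSet).comap_apply,
    pullbackMeasure_apply_of_subset_of_injOn hφ lam hU hinj (Subtype.coe_image_subset _ _),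
    ← image_comp, ← domRestrict_eq, image_preimage_eq_inter_range, range_domRestrict,
    Measure.restrict_apply ht]

lemma setIntegral_pullbackMeasure [lam.Regular] [Nonempty X] {E : Type*}
    [NormedAddCommGroup E] [NormedSpace ℝ E] (f : X → E) :
    ∫ x in U, f x ∂pullbackMeasure hφ lam = ∫ y in φ '' U, f (invFunOn φ U y) ∂lam := by
  rw [← integral_subtype_comap hU.measurableSet,
    ← map_domRestrict_comap_pullbackMeasure hφ lam hU hinj,
    (hφ.isOpenEmbedding_domRestrict hU hinj).measurableEmbedding.integral_map]
  congr with x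
  rw [domRestrict_apply, hinj.leftInvOn_invFunOn x.2]

lemma integral_pullbackMeasure_of_support_subset [lam.Regular] [Nonempty X] {E : Type*}
    [NormedAddCommGroup E] [NormedSpace ℝ E] {f : X → E} (hf : support f ⊆ U) :
    ∫ x, f x ∂pullbackMeasure hφ lam =
      ∫ y, (φ '' U).indicator (fun y => f (invFunOn φ U y)) y ∂lam := by
  rw [← setIntegral_eq_integral_of_forall_compl_eq_zero fun x hx =>
      notMem_support.mp fun h => hx (hf h),
    setIntegral_pullbackMeasure hφ lam hU hinj,
    integral_indicator (hφ.isOpenMap U hU).measurableSet]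

end PullbackMeasure

theorem MeasureTheory.Measure.ext_of_integral_eq_of_tsupport_subset {X : Type*}
    [TopologicalSpace X] [T2Space X] [LocallyCompactSpace X] [MeasurableSpace X] [BorelSpace X]
    {μ ν : Measure X} [μ.Regular] [ν.Regular] {p : Set X → Prop}
    (hp : ∀ x, ∃ U, IsOpen U ∧ x ∈ U ∧ p U)
    (h : ∀ U, IsOpen U → p U → ∀ f : X → ℝ, Continuous f → HasCompactSupport f →
      tsupport f ⊆ U → ∫ x, f x ∂μ = ∫ x, f x ∂ν) :
    μ = ν := by
  refine Measure.ext_of_integral_eq_on_compactlySupported fun f => ?_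
  choose U hUo hxU hpU using hp
  obtain ⟨t, ht⟩ := f.hasCompactSupport.elim_finite_subcover U hUo
    fun x _ => mem_iUnion.2 ⟨x, hxU x⟩
  obtain ⟨ρ, hρU, -⟩ := PartitionOfUnity.exists_isSubordinate_of_locallyFinite_t2space
    f.hasCompactSupport (fun i : t => U i) (fun i => hUo i) (locallyFinite_of_finite _)
    (by simpa [iUnion_subtype] using ht)
  have hsum : ∀ x, f x = ∑ i, ρ i x * f x := fun x => by
    by_cases hx : x ∈ tsupport f
    · rw [← Finset.sum_mul, ← finsum_eq_sum_of_fintype, ρ.sum_eq_one hx, one_mul]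
    · simp [image_eq_zero_of_notMem_tsupport hx]
  have hcont (i) : Continuous fun x => ρ i x * f x := (ρ i).continuous.mul f.continuous
  have hcpt (i) : HasCompactSupport fun x => ρ i x * f x := f.hasCompactSupport.mul_left
  have hdecomp (m : Measure X) [IsFiniteMeasureOnCompacts m] :
      ∫ x, f x ∂m = ∑ i, ∫ x, ρ i x * f x ∂m := by
    rw [← integral_finsetSum _ fun i _ => (hcont i).integrable_of_hasCompactSupport (hcpt i)]
    exact integral_congr_ae (.of_forall hsum)
  rw [hdecomp μ, hdecomp ν]
  exact Finset.sum_congr rfl fun i _ => h _ (hUo i) (hpU i) _ (hcont i) (hcpt i)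
    (tsupport_mul_subset_left.trans (hρU i))

theorem stmt_16_general {X Y : Type*} [TopologicalSpace X] [LocallyCompactSpace X] [T2Space X]
    [Nonempty X] [TopologicalSpace Y] [T2Space Y]
    [MeasurableSpace X] [BorelSpace X] [MeasurableSpace Y] [BorelSpace Y]
    (φ : X → Y) (hφ : IsLocalHomeomorph φ)
    (lam : Measure Y) [lam.Regular] :
    ∃! mu : Measure X, mu.Regular ∧
      ∀ U : Set X, IsOpen U → Set.InjOn φ U →
        ∀ f : X → ℝ, Continuous f → HasCompactSupport f → tsupport f ⊆ U →
          ∫ x, f x ∂mu =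
            ∫ y, Set.indicator (φ '' U) (fun y => f (Function.invFunOn φ U y)) y ∂lam := by
  have hpull : ∀ U : Set X, IsOpen U → InjOn φ U → ∀ f : X → ℝ, Continuous f →
      HasCompactSupport f → tsupport f ⊆ U → ∫ x, f x ∂pullbackMeasure hφ lam =
        ∫ y, (φ '' U).indicator (fun y => f (invFunOn φ U y)) y ∂lam :=
    fun U hU hinj f _ _ hf => integral_pullbackMeasure_of_support_subset hφ lam hU hinj
      ((subset_tsupport f).trans hf)
  refine ⟨pullbackMeasure hφ lam, ⟨inferInstance, hpull⟩, fun ν ⟨_, hν⟩ => ?_⟩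
  exact Measure.ext_of_integral_eq_of_tsupport_subset hφ.isLocallyInjective
    fun U hU hinj f hf hfc hfU =>
      (hν U hU hinj f hf hfc hfU).trans (hpull U hU hinj f hf hfc hfU).symm

/-- Let `X`, `Y` be locally compact Hausdorff spaces, `φ : X → Y` a surjective
local homeomorphism and `λ` a Radon measure on `Y`. Then there is a unique
(Radon) measure `φ*(λ)` on `X` such that for every open `U ⊆ X` on which `φ`
restricts to a homeomorphism and every `f ∈ C_c(X)` supported in `U`,
`∫_X f dφ*(λ) = ∫_Y (f ∘ (φ|_U)⁻¹ extended by zero) dλ`. -/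
theorem stmt_16 {X Y : Type*} [TopologicalSpace X] [LocallyCompactSpace X] [T2Space X]
    [Nonempty X] [TopologicalSpace Y] [LocallyCompactSpace Y] [T2Space Y]
    [MeasurableSpace X] [BorelSpace X] [MeasurableSpace Y] [BorelSpace Y]
    (φ : X → Y) (hφ : IsLocalHomeomorph φ) (hsurj : Function.Surjective φ)
    (lam : Measure Y) [lam.Regular] :
    ∃! mu : Measure X, mu.Regular ∧
      ∀ U : Set X, IsOpen U → Set.InjOn φ U →
        ∀ f : X → ℝ, Continuous f → HasCompactSupport f → tsupport f ⊆ U →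
          ∫ x, f x ∂mu =
            ∫ y, Set.indicator (φ '' U) (fun y => f (Function.invFunOn φ U y)) y ∂lam :=
  stmt_16_general φ hφ lam
end

section
/- Let X and Y be locally compact Hausdorff spaces and φ : X → Y a local homeomorphism onto its image. Let U be an open subset of X with compact closure such that φ restricted to the closure of U is a homeomorphism onto its image, and let f be a continuous function with compact support contained in U. Then there exists a continuous compactly supported function f' on Y such that f' ∘ φ = f on U and supp(f') ∩ φ(X) ⊆ φ(U). -/
/-!
Since `φ` is open onto its image, `φ '' U = V ∩ range φ` for some open `V ⊆ Y`. The function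
`f ∘ (φ|_{closure U})⁻¹` on the compact set `φ '' closure U` extends continuously to `Y` by Tietze
(applied in the one-point compactification, which is normal). Multiplying the extension by a
Urysohn function equal to `1` on `φ '' tsupport f` with compact support inside `V` gives `f'`.
-/

open Set Function

universe u v

theorem IsOpenMap.exists_isOpen_inter_range_eq_image {X Y : Type*} [TopologicalSpace X]
    [TopologicalSpace Y] {φ : X → Y} (hφ : IsOpenMap (rangeFactorization φ)) {U : Set X}
    (hU : IsOpen U) : ∃ V : Set Y, IsOpen V ∧ V ∩ range φ = φ '' U := by
  obtain ⟨V, hV, hVU⟩ := isOpen_induced_iff.mp (hφ U hU)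
  refine ⟨V, hV, ?_⟩
  rw [inter_comm, ← Subtype.image_preimage_coe, hVU, image_image]
  rfl

theorem exists_continuousMap_comp_eq_on_of_injOn {X : Type*} {Y : Type u} {T : Type v}
    [TopologicalSpace X] [TopologicalSpace Y] [WeaklyLocallyCompactSpace Y] [T2Space Y]
    [TopologicalSpace T] [TietzeExtension.{u, v} T] {φ : X → Y} {s : Set X}
    (hs : IsCompact s) (hφ : ContinuousOn φ s) (hinj : InjOn φ s) {f : X → T}
    (hf : ContinuousOn f s) : ∃ g : C(Y, T), ∀ x ∈ s, g (φ x) = f x := by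
  have : CompactSpace s := isCompact_iff_compactSpace.mp hs
  have he : Topology.IsClosedEmbedding (fun x : s ↦ (φ x : OnePoint Y)) :=
    (OnePoint.continuous_coe.comp hφ.domRestrict).isClosedEmbedding
      fun a b hab ↦ Subtype.ext (hinj a.2 b.2 (OnePoint.coe_injective hab))
  obtain ⟨G, hG⟩ := ContinuousMap.exists_extension' he ⟨s.domRestrict f, hf.domRestrict⟩
  exact ⟨G.comp ⟨_, OnePoint.continuous_coe⟩, fun x hx ↦ congrFun hG ⟨x, hx⟩⟩

theorem stmt_19_general {X Y : Type*} [TopologicalSpace X]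
    [TopologicalSpace Y] [LocallyCompactSpace Y] [T2Space Y]
    (φ : X → Y) (hc : Continuous φ)
    (hloc : IsLocalHomeomorph (Set.rangeFactorization φ))
    (U : Set X) (hU : IsOpen U) (hUc : IsCompact (closure U))
    (hinj : Set.InjOn φ (closure U))
    (f : X → ℝ) (hf : Continuous f) (hsupp : tsupport f ⊆ U) :
    ∃ f' : Y → ℝ, Continuous f' ∧ HasCompactSupport f' ∧
      (∀ x ∈ U, f' (φ x) = f x) ∧
      tsupport f' ∩ Set.range φ ⊆ φ '' U := by
  obtain ⟨V, hV, hVU⟩ := hloc.isOpenMap.exists_isOpen_inter_range_eq_image hU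
  have hKV : φ '' tsupport f ⊆ V := (image_mono hsupp).trans (hVU ▸ inter_subset_left)
  have hK : IsCompact (φ '' tsupport f) :=
    (hUc.of_isClosed_subset (isClosed_tsupport f) (hsupp.trans subset_closure)).image hc
  obtain ⟨χ, hχ1, hχc, hχV, -⟩ := exists_continuousMap_one_of_isCompact_subset_isOpen hK hV hKV
  obtain ⟨g, hg⟩ :=
    exists_continuousMap_comp_eq_on_of_injOn hUc hc.continuousOn hinj hf.continuousOn
  refine ⟨χ * g, (χ * g).continuous, HasCompactSupport.mul_right hχc, fun x hx ↦ ?_,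
    (inter_subset_inter_left _ (tsupport_mul_subset_left.trans hχV)).trans hVU.subset⟩
  by_cases hfx : x ∈ tsupport f
  · simp [hχ1 (mem_image_of_mem φ hfx), hg x (subset_closure hx)]
  · simp [hg x (subset_closure hx), image_eq_zero_of_notMem_tsupport hfx]

/-- Let `X`, `Y` be locally compact Hausdorff spaces and `φ : X → Y` a
continuous local homeomorphism onto its image. Let `U ⊆ X` be open with
compact closure, with `φ` restricted to `closure U` a homeomorphism onto its
image (in particular injective on `closure U`), and let `f` be continuous with
compact support contained in `U`. Then there is a continuous compactly
supported `f'` on `Y` with `f' ∘ φ = f` on `U` and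
`supp(f') ∩ φ(X) ⊆ φ(U)`. -/
theorem stmt_19 {X Y : Type*} [TopologicalSpace X] [LocallyCompactSpace X] [T2Space X]
    [TopologicalSpace Y] [LocallyCompactSpace Y] [T2Space Y]
    (φ : X → Y) (hc : Continuous φ)
    (hloc : IsLocalHomeomorph (Set.rangeFactorization φ))
    (U : Set X) (hU : IsOpen U) (hUc : IsCompact (closure U))
    (hinj : Set.InjOn φ (closure U))
    (f : X → ℝ) (hf : Continuous f) (hsupp : tsupport f ⊆ U) :
    ∃ f' : Y → ℝ, Continuous f' ∧ HasCompactSupport f' ∧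
      (∀ x ∈ U, f' (φ x) = f x) ∧
      tsupport f' ∩ Set.range φ ⊆ φ '' U :=
  stmt_19_general φ hc hloc U hU hUc hinj f hf hsupp
end
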